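/- The numerical value of the corrected constant satisfies 4.6 < Θ·(1−β) + α < 4.7, where Θ = Σ_{k≥1} p_k²/(2(p_k+1))·∏_{j<k}(p_j+2)/(2(p_j+1)), α = Σ_{k≥1} p_k²/(2(p_k+1)²)·∏_{j<k}(p_j+2)/(2(p_j+1)), β = Σ_{k≥1} p_k/(2(p_k+1)²)·∏_{j<k}(p_j+2)/(2(p_j+1)). -/

import Mathlib

/-!
Write `w_k = ∏_{j<k} (p_j + 2)/(2(p_j + 1))`. Since `p_j ≥ j + 2` and `x ↦ (x + 2)/(2(x + 1))` is
decreasing, the factors of `w_k` are at most `(j + 4)/(2(j + 3))`, and the product telescopes to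
`w_k ≤ (k + 3)/(3 · 2^k)`. Chebyshev's elementary estimate `2^n ≤ (n + 1) · lcm(1, …, n) ≤
(n + 1) · n^{π(n)}` gives `p_k ≤ 2k²` for `k ≥ 7`. The coefficients of `Θ`, `α` and `β` are all at
most `p_k/2 ≤ k²`, so from `k = 25` on the terms are dominated by a geometric series of ratio `3/4`
with total below `10⁻³`. The first 25 terms, computed exactly, then enclose `Θ`, `α`, `β` tightly
enough to decide the inequality.
-/

/-- `P j` is the `(j+1)`-st prime (0-indexed), as a real number. -/
noncomputable def P (j : ℕ) : ℝ := (Nat.nth Nat.Prime j : ℝ)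

/-- `Θ = Σ_{k≥1} p_k²/(2(p_k+1))·∏_{j<k}(p_j+2)/(2(p_j+1))` (0-indexed). -/
noncomputable def Theta : ℝ :=
  ∑' k : ℕ, (P k) ^ 2 / (2 * (P k + 1)) * ∏ j ∈ Finset.range k, (P j + 2) / (2 * (P j + 1))

/-- `α = Σ_{k≥1} p_k²/(2(p_k+1)²)·∏_{j<k}(p_j+2)/(2(p_j+1))` (0-indexed). -/
noncomputable def alpha : ℝ :=
  ∑' k : ℕ, (P k) ^ 2 / (2 * (P k + 1) ^ 2) * ∏ j ∈ Finset.range k, (P j + 2) / (2 * (P j + 1))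

/-- `β = Σ_{k≥1} p_k/(2(p_k+1)²)·∏_{j<k}(p_j+2)/(2(p_j+1))` (0-indexed). -/
noncomputable def beta : ℝ :=
  ∑' k : ℕ, P k / (2 * (P k + 1) ^ 2) * ∏ j ∈ Finset.range k, (P j + 2) / (2 * (P j + 1))

open Finset
open scoped Nat.Prime

namespace Nat

theorem lcmUpto_le_pow_primeCounting (n : ℕ) : lcmUpto n ≤ n ^ π n := by
  rcases eq_or_ne n 0 with rfl | hn
  · simp [lcmUpto]
  rw [lcmUpto_eq_prod_pow_log, ← primesLE_card_eq_primeCounting, ← prod_const]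
  exact prod_le_prod' fun p _ => pow_log_le_self p hn

theorem two_pow_le_succ_mul_pow_primeCounting (n : ℕ) : 2 ^ n ≤ (n + 1) * n ^ π n :=
  (Chebyshev.two_pow_le_mul_lcmUpto n).trans
    (Nat.mul_le_mul_left _ (lcmUpto_le_pow_primeCounting n))

theorem two_mul_sq_lt_two_pow {k : ℕ} (hk : 7 ≤ k) : 2 * k ^ 2 < 2 ^ k := by
  induction k, hk using Nat.le_induction with
  | base => norm_num
  | succ k hk ih =>
    rw [pow_succ 2 k]
    nlinarith

theorem nth_prime_le_two_mul_sq {k : ℕ} (hk : 7 ≤ k) : nth Nat.Prime k ≤ 2 * k ^ 2 := by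
  suffices k < π (2 * k ^ 2) from Nat.lt_succ_iff.mp (nth_lt_of_lt_count this)
  by_contra! hπ
  have hlt := two_mul_sq_lt_two_pow hk
  have hpow : 2 ^ (2 * k ^ 2) ≤ 2 ^ (k + k * k) :=
    calc 2 ^ (2 * k ^ 2) ≤ (2 * k ^ 2 + 1) * (2 * k ^ 2) ^ π (2 * k ^ 2) :=
          two_pow_le_succ_mul_pow_primeCounting _
      _ ≤ 2 ^ k * (2 ^ k) ^ k := by gcongr <;> omega
      _ = 2 ^ (k + k * k) := by rw [← pow_mul, ← pow_add]
  have hexp := (Nat.pow_le_pow_iff_right (le_refl 2)).mp hpow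
  nlinarith

end Nat

theorem prod_add_two_div_le {p : ℕ → ℝ} (hp : ∀ j : ℕ, (j : ℝ) + 2 ≤ p j) (k : ℕ) :
    ∏ j ∈ range k, (p j + 2) / (2 * (p j + 1)) ≤ (k + 3) / (3 * 2 ^ k) := by
  have hpos : ∀ j : ℕ, 0 < p j + 1 := fun j => by linarith [hp j, j.cast_nonneg (α := ℝ)]
  have hfactor : ∀ j ∈ range k, (p j + 2) / (2 * (p j + 1)) ≤ (j + 4) / (2 * (j + 3)) := by
    intro j _
    have := hp j
    have := hpos j
    rw [div_le_div_iff₀ (by positivity) (by positivity)]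
    nlinarith
  have htelescope : ∀ k : ℕ, ∏ j ∈ range k, ((j : ℝ) + 4) / (2 * (j + 3)) = (k + 3) / (3 * 2 ^ k) := by
    intro k
    induction k with
    | zero => norm_num
    | succ k ih =>
      rw [prod_range_succ, ih]
      field_simp
      push_cast
      ring
  calc ∏ j ∈ range k, (p j + 2) / (2 * (p j + 1))
      ≤ ∏ j ∈ range k, ((j : ℝ) + 4) / (2 * (j + 3)) :=
        prod_le_prod (fun j _ => div_nonneg (by linarith [hpos j]) (by linarith [hpos j])) hfactor
    _ = (k + 3) / (3 * 2 ^ k) := htelescope k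

theorem tsum_mem_Icc_of_tail_le_geometric {f : ℕ → ℝ} (N : ℕ) {a b c q : ℝ} (hq₀ : 0 ≤ q)
    (hq₁ : q < 1) (hf : ∀ k, 0 ≤ f k) (htail : ∀ k, f (k + N) ≤ c * q ^ k)
    (hN : ∑ k ∈ range N, f k ∈ Set.Icc a b) :
    ∑' k, f k ∈ Set.Icc a (b + c / (1 - q)) := by
  have hgeom : Summable fun k => c * q ^ k := (summable_geometric_of_lt_one hq₀ hq₁).mul_left c
  have hf_tail : Summable fun k => f (k + N) := hgeom.of_nonneg_of_le (fun k => hf _) htail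
  have hf_sum : Summable f := (summable_nat_add_iff N).mp hf_tail
  refine ⟨hN.1.trans (hf_sum.sum_le_tsum _ fun k _ => hf k), ?_⟩
  rw [← hf_sum.sum_add_tsum_nat_add N]
  gcongr
  · exact hN.2
  calc ∑' k, f (k + N) ≤ ∑' k, c * q ^ k := hf_tail.tsum_le_tsum htail hgeom
    _ = c / (1 - q) := by rw [tsum_mul_left, tsum_geometric_of_lt_one hq₀ hq₁, div_eq_mul_inv]

theorem sq_mul_add_three_div_two_pow_le (k : ℕ) :
    ((k : ℝ) + 25) ^ 2 * ((k : ℝ) + 28) / (3 * 2 ^ (k + 25)) ≤ 1 / 5000 * (3 / 4) ^ k := by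
  set u : ℕ → ℝ := fun k => ((k : ℝ) + 25) ^ 2 * ((k : ℝ) + 28) / (3 * 2 ^ (k + 25))
  have hstep : ∀ i, u (i + 1) ≤ 3 / 4 * u i := by
    intro i
    have hi : (0 : ℝ) ≤ i := i.cast_nonneg
    calc u (i + 1) = ((i : ℝ) + 26) ^ 2 * ((i : ℝ) + 29) / 2 / (3 * 2 ^ (i + 25)) := by
          simp only [u]; push_cast; ring
      _ ≤ 3 / 4 * (((i : ℝ) + 25) ^ 2 * ((i : ℝ) + 28)) / (3 * 2 ^ (i + 25)) := by
          gcongr; nlinarith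
      _ = 3 / 4 * u i := by simp only [u]; ring
  calc u k ≤ (3 / 4) ^ k * u 0 := le_geom (by norm_num) k fun i _ => hstep i
    _ ≤ 1 / 5000 * (3 / 4) ^ k := by
      rw [mul_comm]
      gcongr
      norm_num [u]

theorem add_two_le_P (j : ℕ) : (j : ℝ) + 2 ≤ P j := by
  rw [P]
  exact_mod_cast Nat.add_two_le_nth_prime j

theorem two_le_P (j : ℕ) : 2 ≤ P j := by
  linarith [add_two_le_P j, j.cast_nonneg (α := ℝ)]

theorem P_le_two_mul_sq {k : ℕ} (hk : 7 ≤ k) : P k ≤ 2 * (k : ℝ) ^ 2 := by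
  rw [P]
  exact_mod_cast Nat.nth_prime_le_two_mul_sq hk

theorem P_eq_of_count {k p : ℕ} (hp : p.Prime) (hk : Nat.count Nat.Prime p = k) : P k = p := by
  rw [P, ← hk, Nat.nth_count hp]

def firstPrimes : List ℕ :=
  [2, 3, 5, 7, 11, 13, 17, 19, 23, 29, 31, 37, 41, 43, 47, 53, 59, 61, 67, 71, 73, 79, 83, 89, 97]

set_option maxRecDepth 10000 in
theorem P_eq_getD_firstPrimes {k : ℕ} (hk : k < 25) : P k = firstPrimes.getD k 0 := by
  interval_cases k <;> exact P_eq_of_count (by norm_num [firstPrimes]) (by decide)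

noncomputable def primeSeriesTerm (g : ℝ → ℝ) (k : ℕ) : ℝ :=
  g (P k) * ∏ j ∈ range k, (P j + 2) / (2 * (P j + 1))

theorem primeSeriesTerm_nonneg {g : ℝ → ℝ} (hg₀ : ∀ x, 2 ≤ x → 0 ≤ g x) (k : ℕ) :
    0 ≤ primeSeriesTerm g k :=
  mul_nonneg (hg₀ _ (two_le_P k)) <| prod_nonneg fun j _ => by have := two_le_P j; positivity

theorem primeSeriesTerm_add_le {g : ℝ → ℝ} (hg : ∀ x, 2 ≤ x → g x ≤ x / 2) (k : ℕ) :
    primeSeriesTerm g (k + 25) ≤ 1 / 5000 * (3 / 4) ^ k := by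
  have hP := P_le_two_mul_sq (k := k + 25) (by omega)
  push_cast at hP
  calc primeSeriesTerm g (k + 25)
      ≤ P (k + 25) / 2 * ((((k + 25 : ℕ) : ℝ) + 3) / (3 * 2 ^ (k + 25))) :=
        mul_le_mul (hg _ (two_le_P _)) (prod_add_two_div_le add_two_le_P _)
          (prod_nonneg fun j _ => by have := two_le_P j; positivity)
          (by have := two_le_P (k + 25); positivity)
    _ ≤ ((k : ℝ) + 25) ^ 2 * ((k : ℝ) + 28) / (3 * 2 ^ (k + 25)) := by
        rw [mul_div_assoc']
        apply div_le_div_of_nonneg_right _ (by positivity)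
        push_cast
        nlinarith
    _ ≤ 1 / 5000 * (3 / 4) ^ k := sq_mul_add_three_div_two_pow_le k

theorem tsum_primeSeriesTerm_mem_Icc {g : ℝ → ℝ} (hg₀ : ∀ x, 2 ≤ x → 0 ≤ g x)
    (hg : ∀ x, 2 ≤ x → g x ≤ x / 2) {a b : ℝ}
    (hS : ∑ k ∈ range 25, primeSeriesTerm g k ∈ Set.Icc a b) :
    ∑' k, primeSeriesTerm g k ∈ Set.Icc a (b + 1 / 1250) := by
  convert tsum_mem_Icc_of_tail_le_geometric 25 (by norm_num) (by norm_num)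
    (primeSeriesTerm_nonneg hg₀) (primeSeriesTerm_add_le hg) hS using 3
  norm_num

theorem Theta_mem_Icc : Theta ∈ Set.Icc 4.98 (4.99 + 1 / 1250) :=
  tsum_primeSeriesTerm_mem_Icc (g := fun x => x ^ 2 / (2 * (x + 1))) (fun x hx => by positivity)
    (fun x hx => by rw [div_le_div_iff₀ (by positivity) (by norm_num)]; nlinarith) (by
      simp (disch := decide) only [primeSeriesTerm, sum_range_succ, prod_range_succ,
        sum_range_zero, prod_range_zero, P_eq_getD_firstPrimes]
      norm_num [firstPrimes])

theorem alpha_mem_Icc : alpha ∈ Set.Icc 0.774 (0.775 + 1 / 1250) :=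
  tsum_primeSeriesTerm_mem_Icc (g := fun x => x ^ 2 / (2 * (x + 1) ^ 2)) (fun x hx => by positivity)
    (fun x hx => by rw [div_le_div_iff₀ (by positivity) (by norm_num)]; nlinarith) (by
      simp (disch := decide) only [primeSeriesTerm, sum_range_succ, prod_range_succ,
        sum_range_zero, prod_range_zero, P_eq_getD_firstPrimes]
      norm_num [firstPrimes])

theorem beta_mem_Icc : beta ∈ Set.Icc 0.225 (0.226 + 1 / 1250) :=
  tsum_primeSeriesTerm_mem_Icc (g := fun x => x / (2 * (x + 1) ^ 2)) (fun x hx => by positivity)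
    (fun x hx => by rw [div_le_div_iff₀ (by positivity) (by norm_num)]; nlinarith) (by
      simp (disch := decide) only [primeSeriesTerm, sum_range_succ, prod_range_succ,
        sum_range_zero, prod_range_zero, P_eq_getD_firstPrimes]
      norm_num [firstPrimes])

/-- The corrected constant satisfies `4.6 < Θ·(1−β)+α < 4.7`. -/
theorem corrected_constant_bounds :
    4.6 < Theta * (1 - beta) + alpha ∧ Theta * (1 - beta) + alpha < 4.7 := by
  obtain ⟨hΘ₁, hΘ₂⟩ := Theta_mem_Icc
  obtain ⟨hα₁, hα₂⟩ := alpha_mem_Icc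
  obtain ⟨hβ₁, hβ₂⟩ := beta_mem_Icc
  have hβ : 0 ≤ 1 - beta := by linarith
  constructor
  · nlinarith [mul_le_mul_of_nonneg_right hΘ₁ hβ]
  · nlinarith [mul_le_mul_of_nonneg_right hΘ₂ hβ]
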